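/- arXiv:2310.07919 — 2 statements merged into one kernel-verified Lean document; each statement's English description precedes it below -/
import Mathlib

section
/- Let (V,E) be a history sDAG. For any node v ∈ V with v ≠ ρ, there exists a subhistory s of (V,E) whose root node is v. -/
universe u v

/-- A node of a history sDAG: either the universal ancestor (UA) node `ρ`,
or a node carrying a label `ℓ : Y` and a subpartition `U : Set (Set Y)`. -/
inductive HNode (Y : Type u) : Type u
  | ua : HNode Y
  | node : Y → Set (Set Y) → HNode Y

namespace HistorySDAGs

variable {Y : Type u}

/-- `U ∈ Part(Y)`: `U` is a set of pairwise disjoint nonempty (finite) clades with `|U| ≠ 1`. -/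
def IsPart (U : Set (Set Y)) : Prop :=
  (∀ C ∈ U, C ≠ ∅) ∧
  (∀ C₁ ∈ U, ∀ C₂ ∈ U, C₁ ≠ C₂ → Disjoint C₁ C₂) ∧
  (∀ C, U ≠ {C}) ∧
  U.Finite ∧ ∀ C ∈ U, C.Finite

open Classical in
/-- The clade union of a node. -/
noncomputable def cladeUnion : HNode Y → Set Y
  | HNode.ua => ∅
  | HNode.node ℓ U => if U = ∅ then {ℓ} else ⋃₀ U

/-- Reachability via directed edges in `E`. -/
def Reach (E : Set (HNode Y × HNode Y)) (a b : HNode Y) : Prop :=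
  Relation.ReflTransGen (fun x y => (x, y) ∈ E) a b

/-- `(V, E)` is a history sDAG on labels `Y`. -/
structure IsHSDAG (V : Set (HNode Y)) (E : Set (HNode Y × HNode Y)) : Prop where
  ua_mem : HNode.ua ∈ V
  valid : ∀ ℓ U, HNode.node ℓ U ∈ V → IsPart U
  edge_mem : ∀ e ∈ E, e.1 ∈ V ∧ e.2 ∈ V
  reach_ua : ∀ v ∈ V, Reach E HNode.ua v
  no_in_ua : ∀ v : HNode Y, (v, HNode.ua) ∉ E
  edge_clade : ∀ ℓ U v, (HNode.node ℓ U, v) ∈ E → cladeUnion v ∈ U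
  clade_cov : ∀ ℓ U, HNode.node ℓ U ∈ V → ∀ C ∈ U,
      ∃ v, (HNode.node ℓ U, v) ∈ E ∧ cladeUnion v = C

/-- Every node-clade pair of `V` has exactly one descendant edge in `E`. -/
def UniqueDesc (V : Set (HNode Y)) (E : Set (HNode Y × HNode Y)) : Prop :=
  ∀ ℓ U, HNode.node ℓ U ∈ V → ∀ C ∈ U,
    ∃! vc, (HNode.node ℓ U, vc) ∈ E ∧ cladeUnion vc = C

/-- `(V, E)` is a history: a history sDAG in which `ρ` has exactly one child and
each node-clade pair has exactly one descendant edge. -/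
def IsHistory (V : Set (HNode Y)) (E : Set (HNode Y × HNode Y)) : Prop :=
  IsHSDAG V E ∧ (∃! v, (HNode.ua, v) ∈ E) ∧ UniqueDesc V E

/-- `(Vs, Es)` is a subhistory of `(V, E)` with root node `vr`. -/
structure IsSubhistoryRooted (V : Set (HNode Y)) (E : Set (HNode Y × HNode Y))
    (Vs : Set (HNode Y)) (Es : Set (HNode Y × HNode Y)) (vr : HNode Y) : Prop where
  subV : Vs ⊆ V
  subE : Es ⊆ E
  ua_not_mem : HNode.ua ∉ Vs
  edge_mem : ∀ e ∈ Es, e.1 ∈ Vs ∧ e.2 ∈ Vs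
  root_mem : vr ∈ Vs
  reach_root : ∀ v ∈ Vs, Reach Es vr v
  unique_desc : ∀ ℓ U, HNode.node ℓ U ∈ Vs → ∀ C ∈ U,
      ∃! vc, (HNode.node ℓ U, vc) ∈ Es ∧ cladeUnion vc = C

/-- `(Vs, Es)` is a subhistory of `(V, E)`. -/
def IsSubhistory (V : Set (HNode Y)) (E : Set (HNode Y × HNode Y))
    (Vs : Set (HNode Y)) (Es : Set (HNode Y × HNode Y)) : Prop :=
  ∃ vr, IsSubhistoryRooted V E Vs Es vr

/-- `(Vt, Et)` is a history in (a trim of) the history sDAG `(V, E)`. -/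
def HistoryIn (V : Set (HNode Y)) (E : Set (HNode Y × HNode Y))
    (Vt : Set (HNode Y)) (Et : Set (HNode Y × HNode Y)) : Prop :=
  Vt ⊆ V ∧ Et ⊆ E ∧ IsHistory Vt Et

/-- The set of labels of leaf nodes in a node set. -/
def leafLabels (Vt : Set (HNode Y)) : Set Y := {ℓ | HNode.node ℓ ∅ ∈ Vt}

/-- A candidate history/graph: a pair of a node set and an edge set. -/
abbrev Hist (Y : Type u) := Set (HNode Y) × Set (HNode Y × HNode Y)

/-- The node set of the history sDAG constructed from the collection `T`. -/
def unionV (T : Set (Hist Y)) : Set (HNode Y) := ⋃ t ∈ T, t.1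

/-- The edge set of the history sDAG constructed from the collection `T`. -/
def unionE (T : Set (Hist Y)) : Set (HNode Y × HNode Y) := ⋃ t ∈ T, t.2

/-- The node set of the complete history sDAG on labels `Y`. -/
def completeV (Y : Type u) : Set (HNode Y) :=
  {v | v = HNode.ua ∨ ∃ ℓ U, v = HNode.node ℓ U ∧ IsPart U}

/-- The edge set of the complete history sDAG on labels `Y`. -/
def completeE (Y : Type u) : Set (HNode Y × HNode Y) :=
  {e | e.1 ∈ completeV Y ∧ e.2 ∈ completeV Y ∧ e.2 ≠ HNode.ua ∧
    (e.1 = HNode.ua ∨ ∃ ℓ U, e.1 = HNode.node ℓ U ∧ cladeUnion e.2 ∈ U)}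

variable {W : Type v}

/-- The weight `g_f` of a subgraph with edge set `Es`: the sum of `f` over all edges. -/
noncomputable def gweight [AddCommMonoid W] (f : HNode Y × HNode Y → W)
    (Es : Set (HNode Y × HNode Y)) : W := ∑ᶠ e ∈ Es, f e

/-- The order is total on the subset `S` of `W`. -/
def TotalOn [PartialOrder W] (S : Set W) : Prop := ∀ a ∈ S, ∀ b ∈ S, a ≤ b ∨ b ≤ a

/-- The order respects addition on the subset `S` of `W`. -/
def RespectsAdd [AddCommMonoid W] [PartialOrder W] (S : Set W) : Prop :=
  ∀ a ∈ S, ∀ b ∈ S, ∀ c : W, a < b ↔ a + c < b + c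

/-- Weights of subhistories of `(V, E)` rooted at `v`. -/
def subWeights [AddCommMonoid W] (f : HNode Y × HNode Y → W)
    (V : Set (HNode Y)) (E : Set (HNode Y × HNode Y)) (v : HNode Y) : Set W :=
  {w | ∃ Vs Es, IsSubhistoryRooted V E Vs Es v ∧ w = gweight f Es}

/-- Weights of augmented subhistories below the node-clade pair `(v, C)`. -/
def augWeights [AddCommMonoid W] (f : HNode Y × HNode Y → W)
    (V : Set (HNode Y)) (E : Set (HNode Y × HNode Y)) (v : HNode Y) (C : Set Y) : Set W :=
  {w | ∃ vc Vs Es, (v, vc) ∈ E ∧ cladeUnion vc = C ∧ IsSubhistoryRooted V E Vs Es vc ∧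
    w = gweight f (insert (v, vc) Es)}

/-- Weights of histories in `(V, E)`. -/
def historyWeights [AddCommMonoid W] (f : HNode Y × HNode Y → W)
    (V : Set (HNode Y)) (E : Set (HNode Y × HNode Y)) : Set W :=
  {w | ∃ Vt Et, HistoryIn V E Vt Et ∧ w = gweight f Et}

/-- `W` is clade-ordered with respect to `f` and `(V, E)`. -/
def CladeOrdered [AddCommMonoid W] [PartialOrder W] (f : HNode Y × HNode Y → W)
    (V : Set (HNode Y)) (E : Set (HNode Y × HNode Y)) : Prop :=
  (∀ v ∈ V, v ≠ HNode.ua →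
      TotalOn (subWeights f V E v) ∧ RespectsAdd (subWeights f V E v)) ∧
  (∀ ℓ U, HNode.node ℓ U ∈ V → ∀ C ∈ U,
      TotalOn (augWeights f V E (HNode.node ℓ U) C) ∧
      RespectsAdd (augWeights f V E (HNode.node ℓ U) C)) ∧
  TotalOn (historyWeights f V E)

/-- The minimum-weight histories in `(V, E)` with respect to `g_f`. -/
def minHistories [AddCommMonoid W] [PartialOrder W] (f : HNode Y × HNode Y → W)
    (V : Set (HNode Y)) (E : Set (HNode Y × HNode Y)) : Set (Hist Y) :=
  {t | HistoryIn V E t.1 t.2 ∧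
    ∀ t' : Hist Y, HistoryIn V E t'.1 t'.2 → gweight f t.2 ≤ gweight f t'.2}

open Classical in
/-- The map `q` collapsing the edge `(vp, vc)`, sending both `vp` and `vc` to `vp'`. -/
noncomputable def collapseMap (vp vc vp' : HNode Y) (v : HNode Y) : HNode Y :=
  if v = vp ∨ v = vc then vp' else v

/-- The history obtained by collapsing the edge `(vp, vc)` (into `vp'`) in `t`. -/
noncomputable def collapseEdgeHist (vp vc vp' : HNode Y) (t : Hist Y) : Hist Y :=
  (collapseMap vp vc vp' '' t.1,
   (fun e : HNode Y × HNode Y => (collapseMap vp vc vp' e.1, collapseMap vp vc vp' e.2)) ''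
     (t.2 \ {(vp, vc)}))

/-- The new parent node `(ℓ_p, (U_p ∪ U_c) \ {CU(v_c)})` formed when collapsing an edge. -/
noncomputable def newParent : HNode Y → HNode Y → HNode Y
  | HNode.node ℓp Up, HNode.node ℓc Uc =>
      HNode.node ℓp ((Up ∪ Uc) \ {cladeUnion (HNode.node ℓc Uc)})
  | v, _ => v

/-- `t'` results from `t` by collapsing one label-collapsible edge. -/
def LabelCollapseStep (t t' : Hist Y) : Prop :=
  ∃ ℓ Up Uc, (HNode.node ℓ Up, HNode.node ℓ Uc) ∈ t.2 ∧ Uc ≠ ∅ ∧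
    t' = collapseEdgeHist (HNode.node ℓ Up) (HNode.node ℓ Uc)
        (newParent (HNode.node ℓ Up) (HNode.node ℓ Uc)) t

/-- `t` is label-collapsed: it has no label-collapsible edge. -/
def LabelCollapsed (t : Hist Y) : Prop :=
  ∀ ℓ Up Uc, (HNode.node ℓ Up, HNode.node ℓ Uc) ∈ t.2 → Uc = ∅

/-- `(vp, vc)` is a label-collapsible edge of `G`. -/
def LabelCollapsibleEdge (G : Hist Y) (vp vc : HNode Y) : Prop :=
  (vp, vc) ∈ G.2 ∧ ∃ ℓ Up Uc, vp = HNode.node ℓ Up ∧ vc = HNode.node ℓ Uc ∧ Uc ≠ ∅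

/-- `T` is a label-collapsible edge cover of `G`. -/
def LabelCollapsibleEdgeCover (G : Hist Y) (T : Set (Hist Y)) : Prop :=
  (∀ t ∈ T, HistoryIn G.1 G.2 t.1 t.2) ∧
  (∀ e ∈ G.2, ∃ t ∈ T, e ∈ t.2) ∧
  (∀ vp vc, LabelCollapsibleEdge G vp vc →
    ∀ Vs Es, IsSubhistory G.1 G.2 Vs Es → (vp, vc) ∈ Es →
      ∃ t ∈ T, Vs ⊆ t.1 ∧ Es ⊆ t.2)

open Classical in
/-- Collapsing the edge `(vp, vc)` in the history sDAG `G`, via `E⁺`, `R`, `E⁻`, `E'`, `V'`. -/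
noncomputable def collapseDAGEdge (vp vc : HNode Y) (G : Hist Y) : Hist Y :=
  let vp' := newParent vp vc
  let Eplus : Set (HNode Y × HNode Y) :=
    (G.2 ∪ {e | ∃ v, e = (v, vp') ∧ (v, vp) ∈ G.2}
        ∪ {e | ∃ v, e = (vp', v) ∧ (vp, v) ∈ G.2 ∧ cladeUnion v ≠ cladeUnion vc}
        ∪ {e | ∃ v, e = (vp', v) ∧ (vc, v) ∈ G.2}) \ {(vp, vc)}
  let R : Set (HNode Y × HNode Y) :=
    if ∃ v, (vp, v) ∈ Eplus ∧ cladeUnion v = cladeUnion vc then ∅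
    else {e ∈ Eplus | e.2 = vp}
  let Eminus := Eplus \ R
  let E' := {e ∈ Eminus | Reach Eminus HNode.ua e.1}
  ({v | ∃ e ∈ E', v = e.1 ∨ v = e.2}, E')

/-- `t'` is obtained from `t` by a subhistory swap, replacing a subhistory of `t` by a
conforming subhistory of some history in `S`. -/
def SwapStepUsing (S : Set (Hist Y)) (t t' : Hist Y) : Prop :=
  ∃ t₂ ∈ S, ∃ Vs' Es' vr' vp,
    IsSubhistoryRooted t₂.1 t₂.2 Vs' Es' vr' ∧ (vp, vr') ∈ t₂.2 ∧
    ∃ Vs Es vr, IsSubhistoryRooted t.1 t.2 Vs Es vr ∧ (vp, vr) ∈ t.2 ∧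
      leafLabels Vs = leafLabels Vs' ∧
      t' = ((t.1 \ Vs) ∪ Vs', (t.2 \ (Es ∪ {(vp, vr)})) ∪ (Es' ∪ {(vp, vr')}))

/-- Leaves of an abstract rooted graph. -/
def IsLeafIn {α : Type v} (nodes : Set α) (edges : Set (α × α)) (x : α) : Prop :=
  x ∈ nodes ∧ ∀ c, (x, c) ∉ edges

/-- Reachability via directed edges in an abstract graph. -/
def GReach {α : Type v} (edges : Set (α × α)) (a b : α) : Prop :=
  Relation.ReflTransGen (fun x y => (x, y) ∈ edges) a b

/-- An (internally) labeled tree: a rooted multifurcating tree with no unifurcations,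
with node labels in `Y` that are injective on leaves. -/
structure IsLabeledTree {α : Type v} (nodes : Set α) (edges : Set (α × α))
    (root : α) (lab : α → Y) : Prop where
  root_mem : root ∈ nodes
  edge_mem : ∀ e ∈ edges, e.1 ∈ nodes ∧ e.2 ∈ nodes
  reach_root : ∀ x ∈ nodes, GReach edges root x
  unique_parent : ∀ x a b, (a, x) ∈ edges → (b, x) ∈ edges → a = b
  no_parent_root : ∀ a, (a, root) ∉ edges
  acyclic : ∀ x, ¬ Relation.TransGen (fun a b => (a, b) ∈ edges) x x
  no_unif : ∀ x ∈ nodes, ¬ (∃! c, (x, c) ∈ edges)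
  leaf_inj : ∀ x y, IsLeafIn nodes edges x → IsLeafIn nodes edges y → lab x = lab y → x = y
  finite : nodes.Finite

/-- The set `C_w` of leaf labels below a node `w` of an abstract labeled tree. -/
def leavesBelow {α : Type v} (nodes : Set α) (edges : Set (α × α)) (lab : α → Y) (w : α) :
    Set Y :=
  {y | ∃ u, IsLeafIn nodes edges u ∧ GReach edges w u ∧ y = lab u}

/-- The history sDAG node `v_w` associated to a node `w` of a labeled tree. -/
def treeNodeOf {α : Type v} (nodes : Set α) (edges : Set (α × α)) (lab : α → Y) (w : α) :
    HNode Y :=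
  HNode.node (lab w) {C | ∃ w', (w, w') ∈ edges ∧ C = leavesBelow nodes edges lab w'}

/-- The node set `V_t` of the history associated to a labeled tree. -/
def treeToHistV {α : Type v} (nodes : Set α) (edges : Set (α × α)) (lab : α → Y) :
    Set (HNode Y) :=
  insert HNode.ua (treeNodeOf nodes edges lab '' nodes)

/-- The edge set `E_t` of the history associated to a labeled tree. -/
def treeToHistE {α : Type v} (nodes : Set α) (edges : Set (α × α)) (root : α) (lab : α → Y) :
    Set (HNode Y × HNode Y) :=
  insert (HNode.ua, treeNodeOf nodes edges lab root)
    {e | ∃ w₁ w₂, (w₁, w₂) ∈ edges ∧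
      e = (treeNodeOf nodes edges lab w₁, treeNodeOf nodes edges lab w₂)}


/-!
Pick one descendant edge for every node-clade pair of `V`. The nodes reachable from `v` along
picked edges, together with the picked edges leaving them, form a subhistory rooted at `v`: the
picked edge of `(w, C)` has clade union `C`, so it is the only picked edge descending from
`(w, C)`.
-/

variable {V : Set (HNode Y)} {E : Set (HNode Y × HNode Y)}

lemma Reach.mono {E₁ E₂ : Set (HNode Y × HNode Y)} (hE : E₁ ⊆ E₂) {a b : HNode Y}
    (hab : Reach E₁ a b) : Reach E₂ a b :=
  Relation.ReflTransGen.mono (fun _ _ h => hE h) _ _ hab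

lemma Reach.restrict_source {S : Set (HNode Y × HNode Y)} {a b : HNode Y} (hab : Reach S a b) :
    Reach {e ∈ S | Reach S a e.1} a b := by
  induction hab with
  | refl => exact .refl
  | tail hax hxb ih => exact ih.tail ⟨hxb, hax⟩

namespace IsHSDAG

lemma mem_of_reach (h : IsHSDAG V E) {a b : HNode Y} (ha : a ∈ V) (hab : Reach E a b) :
    b ∈ V := by
  induction hab with
  | refl => exact ha
  | tail _ hxb _ => exact (h.edge_mem _ hxb).2

lemma ne_ua_of_reach (h : IsHSDAG V E) {a b : HNode Y} (ha : a ≠ HNode.ua)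
    (hab : Reach E a b) : b ≠ HNode.ua := by
  rcases hab.cases_tail with rfl | ⟨x, -, hxb⟩
  · exact ha
  · rintro rfl
    exact h.no_in_ua x hxb

end IsHSDAG

instance : Inhabited (HNode Y) := ⟨HNode.ua⟩

noncomputable def pickedChild (E : Set (HNode Y × HNode Y)) (ℓ : Y) (U : Set (Set Y))
    (C : Set Y) : HNode Y :=
  Classical.epsilon fun w => (HNode.node ℓ U, w) ∈ E ∧ cladeUnion w = C

def pickedEdges (V : Set (HNode Y)) (E : Set (HNode Y × HNode Y)) :
    Set (HNode Y × HNode Y) :=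
  {e | ∃ ℓ U, HNode.node ℓ U ∈ V ∧ ∃ C ∈ U, e = (HNode.node ℓ U, pickedChild E ℓ U C)}

namespace IsHSDAG

variable (h : IsHSDAG V E)
include h

lemma pickedChild_spec {ℓ : Y} {U : Set (Set Y)} (hw : HNode.node ℓ U ∈ V) {C : Set Y}
    (hC : C ∈ U) :
    (HNode.node ℓ U, pickedChild E ℓ U C) ∈ E ∧ cladeUnion (pickedChild E ℓ U C) = C :=
  Classical.epsilon_spec (h.clade_cov ℓ U hw C hC)

lemma pickedEdges_subset : pickedEdges V E ⊆ E := by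
  rintro _ ⟨ℓ, U, hw, C, hC, rfl⟩
  exact (h.pickedChild_spec hw hC).1

lemma eq_pickedChild_of_mem_pickedEdges {ℓ : Y} {U : Set (Set Y)} {w : HNode Y}
    (hw : (HNode.node ℓ U, w) ∈ pickedEdges V E) :
    w = pickedChild E ℓ U (cladeUnion w) := by
  obtain ⟨ℓ', U', hV, C, hC, he⟩ := hw
  simp only [Prod.mk.injEq, HNode.node.injEq] at he
  obtain ⟨⟨rfl, rfl⟩, rfl⟩ := he
  rw [(h.pickedChild_spec hV hC).2]

end IsHSDAG

/-- Lemma `nodesareroots`: every non-UA node of a history sDAG is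
the root of some subhistory. -/
theorem exists_subhistory_rooted
    (V : Set (HNode Y)) (E : Set (HNode Y × HNode Y)) (h : IsHSDAG V E)
    (v : HNode Y) (hv : v ∈ V) (hne : v ≠ HNode.ua) :
    ∃ Vs Es, IsSubhistoryRooted V E Vs Es v := by
  set S := pickedEdges V E
  have mem_V {w} (hw : Reach S v w) : w ∈ V := h.mem_of_reach hv (hw.mono h.pickedEdges_subset)
  refine ⟨{w | Reach S v w}, {e ∈ S | Reach S v e.1},
    { subV := fun w hw => mem_V hw
      subE := fun e he => h.pickedEdges_subset he.1
      ua_not_mem := fun hua => h.ne_ua_of_reach hne (hua.mono h.pickedEdges_subset) rfl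
      edge_mem := fun e he => ⟨he.2, he.2.tail he.1⟩
      root_mem := .refl
      reach_root := fun w hw => Reach.restrict_source hw
      unique_desc := fun ℓ U hw C hC => ?_ }⟩
  have hpick := h.pickedChild_spec (mem_V hw) hC
  refine ⟨pickedChild E ℓ U C, ⟨⟨⟨ℓ, U, mem_V hw, C, hC, rfl⟩, hw⟩, hpick.2⟩, ?_⟩
  rintro w ⟨⟨hS, -⟩, rfl⟩
  exact h.eq_pickedChild_of_mem_pickedEdges hS

end HistorySDAGs
end

section
/- Let T be a collection of histories with labels in Y, let (V,E) be the history sDAG constructed from T, let f : E → W be an edge weight function with W clade-ordered with respect to f and (V,E), and suppose g_f(t) = K for all t ∈ T. Then there exists a history t ∈ D(T) with g_f(t) < K if and only if there exists a history t' ∈ D(T) with g_f(t') > K. -/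
universe u v

namespace HistorySDAGs

variable {Y : Type u}

variable {W : Type v}

/-! Suppose some history `h` of `D(T)` does not weigh `K`. Its root edge lies in a history of
`T`, and every edge of `h` lies in some history of `T`; descending through `h` clade by clade
therefore produces two histories `t₂, t₃ ∈ T` with edges `(v, vc₂)`, `(v, vc₃)` into the same
clade `C` whose augmented subhistories have different weights `b < c`. In a history the edges of
such an augmented subhistory are exactly the edges whose target has clade union inside `C`, so
exchanging these edge sets between `t₂` and `t₃` gives two histories of `D(T)`. Writing
`K = R₂ + b = R₃ + c`, they weigh `R₂ + c > K` and `R₃ + b < K`, because the order respects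
addition on the augmented subhistory weights at `(v, C)`. -/

instance inst_s6 : Inhabited (HNode Y) := ⟨HNode.ua⟩

def InClade (C : Set Y) (x : HNode Y) : Prop := x ≠ HNode.ua ∧ cladeUnion x ⊆ C

def nodesBelow (E : Set (HNode Y × HNode Y)) (v : HNode Y) : Set (HNode Y) := {x | Reach E v x}

def edgesBelow (E : Set (HNode Y × HNode Y)) (v : HNode Y) : Set (HNode Y × HNode Y) :=
  {e ∈ E | Reach E v e.1}

/-- The edges of the augmented subhistory `s^{vp}`, for `s` the subhistory rooted at `vc`. -/
def augEdges (E : Set (HNode Y × HNode Y)) (vp vc : HNode Y) : Set (HNode Y × HNode Y) :=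
  insert (vp, vc) (edgesBelow E vc)

lemma reach_of_forall_mem {E E' : Set (HNode Y × HNode Y)} {a b : HNode Y} (h : Reach E a b)
    (hE : ∀ x y, Reach E a x → (x, y) ∈ E → Reach E y b → (x, y) ∈ E') : Reach E' a b := by
  induction h with
  | refl => exact .refl
  | tail hac hcb ih =>
    exact (ih fun x y hx hxy hyc => hE x y hx hxy (hyc.tail hcb)).tail (hE _ _ hac hcb .refl)

lemma subset_cladeUnion {ℓ : Y} {U : Set (Set Y)} {C : Set Y} (hC : C ∈ U) :
    C ⊆ cladeUnion (HNode.node ℓ U) := by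
  rw [cladeUnion, if_neg (Set.nonempty_of_mem hC).ne_empty]
  exact Set.subset_sUnion_of_mem hC

namespace IsPart

variable {U : Set (Set Y)}

lemma ssubset_cladeUnion (hP : IsPart U) (ℓ : Y) {C : Set Y} (hC : C ∈ U) :
    C ⊂ cladeUnion (HNode.node ℓ U) := by
  refine ⟨subset_cladeUnion hC, fun hsub => ?_⟩
  obtain ⟨D, hD, hDC⟩ : ∃ D ∈ U, D ≠ C := by
    by_contra! h
    exact hP.2.2.1 C (Set.eq_singleton_iff_unique_mem.2 ⟨hC, h⟩)
  obtain ⟨y, hy⟩ := Set.nonempty_iff_ne_empty.2 (hP.1 D hD)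
  exact Set.disjoint_left.1 (hP.2.1 D hD C hC hDC) hy (hsub (subset_cladeUnion hD hy))

lemma finite_cladeUnion (hP : IsPart U) (ℓ : Y) : (cladeUnion (HNode.node ℓ U)).Finite := by
  rw [cladeUnion]
  split_ifs
  exacts [Set.finite_singleton ℓ, hP.2.2.2.1.sUnion hP.2.2.2.2]

lemma cladeUnion_nonempty (hP : IsPart U) (ℓ : Y) : (cladeUnion (HNode.node ℓ U)).Nonempty := by
  by_cases hU : U = ∅
  · simp [cladeUnion, hU]
  · obtain ⟨C, hC⟩ := Set.nonempty_iff_ne_empty.2 hU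
    exact (Set.nonempty_iff_ne_empty.2 (hP.1 C hC)).mono (subset_cladeUnion hC)

end IsPart

namespace IsHSDAG

variable {V : Set (HNode Y)} {E : Set (HNode Y × HNode Y)} {x y : HNode Y} {C : Set Y}

lemma ne_ua_of_mem (hG : IsHSDAG V E) (h : (x, y) ∈ E) : y ≠ HNode.ua := by
  rintro rfl
  exact hG.no_in_ua x h

lemma cladeUnion_nonempty (hG : IsHSDAG V E) (hx : x ∈ V) (hx' : x ≠ HNode.ua) :
    (cladeUnion x).Nonempty := by
  cases x with
  | ua => exact absurd rfl hx'
  | node ℓ U => exact (hG.valid ℓ U hx).cladeUnion_nonempty ℓ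

lemma finite_cladeUnion (hG : IsHSDAG V E) (hx : x ∈ V) : (cladeUnion x).Finite := by
  cases x with
  | ua => simp [cladeUnion]
  | node ℓ U => exact (hG.valid ℓ U hx).finite_cladeUnion ℓ

lemma cladeUnion_ssubset (hG : IsHSDAG V E) (h : (x, y) ∈ E) (hx : x ≠ HNode.ua) :
    cladeUnion y ⊂ cladeUnion x := by
  cases x with
  | ua => exact absurd rfl hx
  | node ℓ U =>
    exact (hG.valid ℓ U (hG.edge_mem _ h).1).ssubset_cladeUnion ℓ (hG.edge_clade ℓ U y h)

lemma eq_ua_of_reach (hG : IsHSDAG V E) (h : Reach E x HNode.ua) : x = HNode.ua := by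
  rcases h.cases_tail with h | ⟨z, -, hz⟩
  · exact h.symm
  · exact absurd hz (hG.no_in_ua z)

lemma cladeUnion_subset_of_reach (hG : IsHSDAG V E) (h : Reach E x y) (hx : x ≠ HNode.ua) :
    cladeUnion y ⊆ cladeUnion x := by
  induction h with
  | refl => rfl
  | @tail z w hxz hzw ih =>
    have hz : z ≠ HNode.ua := fun hz => hx (hG.eq_ua_of_reach (hz ▸ hxz))
    exact (hG.cladeUnion_ssubset hzw hz).subset.trans ih

lemma inClade_of_reach (hG : IsHSDAG V E) (hx : InClade C x) (h : Reach E x y) : InClade C y :=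
  ⟨fun hy => hx.1 (hG.eq_ua_of_reach (hy ▸ h)), (hG.cladeUnion_subset_of_reach h hx.1).trans hx.2⟩

lemma not_inClade_of_mem (hG : IsHSDAG V E) (h : (x, y) ∈ E) : ¬ InClade (cladeUnion y) x :=
  fun hx => (hG.cladeUnion_ssubset h hx.1).not_subset hx.2

lemma not_reach_of_mem (hG : IsHSDAG V E) (h : (x, y) ∈ E) : ¬ Reach E y x := fun hyx =>
  hG.not_inClade_of_mem h (hG.inClade_of_reach ⟨hG.ne_ua_of_mem h, subset_rfl⟩ hyx)

lemma eq_of_reach_of_subset (hG : IsHSDAG V E) (h : Reach E x y) (hx : x ≠ HNode.ua)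
    (hxy : cladeUnion x ⊆ cladeUnion y) : x = y := by
  rcases h.cases_head with h | ⟨z, hxz, hzy⟩
  · exact h
  · exact absurd (hxy.trans (hG.cladeUnion_subset_of_reach hzy (hG.ne_ua_of_mem hxz)))
      (hG.cladeUnion_ssubset hxz hx).not_subset

lemma mem_of_reach_s6 (hG : IsHSDAG V E) (hx : x ∈ V) (h : Reach E x y) : y ∈ V := by
  induction h with
  | refl => exact hx
  | tail _ hzy _ => exact (hG.edge_mem _ hzy).2

end IsHSDAG

namespace IsHistory

variable {Vt : Set (HNode Y)} {Et : Set (HNode Y × HNode Y)} {a b c r v x x' y vp vc : HNode Y}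

lemma child_eq_of_inter_nonempty (ht : IsHistory Vt Et) (hb : (a, b) ∈ Et) (hc : (a, c) ∈ Et)
    (hbc : (cladeUnion b ∩ cladeUnion c).Nonempty) : b = c := by
  cases a with
  | ua => exact ht.2.1.unique hb hc
  | node ℓ U =>
    have ha := (ht.1.edge_mem _ hb).1
    have hbU := ht.1.edge_clade ℓ U b hb
    have hcU := ht.1.edge_clade ℓ U c hc
    have hCU : cladeUnion b = cladeUnion c := by
      by_contra hne
      exact Set.not_disjoint_iff_nonempty_inter.2 hbc ((ht.1.valid ℓ U ha).2.1 _ hbU _ hcU hne)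
    exact (ht.2.2 ℓ U ha _ hbU).unique ⟨hb, rfl⟩ ⟨hc, hCU.symm⟩

lemma reach_or_reach (ht : IsHistory Vt Et) (hx : x ∈ Vt) (hy : y ∈ Vt)
    (hxy : (cladeUnion x ∩ cladeUnion y).Nonempty) : Reach Et x y ∨ Reach Et y x := by
  suffices H : ∀ a, Reach Et a x → Reach Et a y → Reach Et x y ∨ Reach Et y x from
    H _ (ht.1.reach_ua x hx) (ht.1.reach_ua y hy)
  intro a hax
  induction hax using Relation.ReflTransGen.head_induction_on with
  | refl => exact Or.inl
  | head hab hbx ih =>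
    intro hay
    rcases hay.cases_head with rfl | ⟨c, hac, hcy⟩
    · exact Or.inr (.head hab hbx)
    · obtain rfl := ht.child_eq_of_inter_nonempty hab hac (hxy.mono (Set.inter_subset_inter
        (ht.1.cladeUnion_subset_of_reach hbx (ht.1.ne_ua_of_mem hab))
        (ht.1.cladeUnion_subset_of_reach hcy (ht.1.ne_ua_of_mem hac))))
      exact ih hcy

lemma reach_iff (ht : IsHistory Vt Et) (hv : v ∈ Vt) (hv' : v ≠ HNode.ua) (hx : x ∈ Vt) :
    Reach Et v x ↔ InClade (cladeUnion v) x := by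
  refine ⟨ht.1.inClade_of_reach ⟨hv', subset_rfl⟩, fun hin => ?_⟩
  obtain ⟨p, hp⟩ := ht.1.cladeUnion_nonempty hx hin.1
  rcases ht.reach_or_reach hv hx ⟨p, hin.2 hp, hp⟩ with h | h
  · exact h
  · rw [ht.1.eq_of_reach_of_subset h hin.1 hin.2]
    exact .refl

lemma reach_of_root (ht : IsHistory Vt Et) (hr : (HNode.ua, r) ∈ Et) (hx : x ∈ Vt)
    (hx' : x ≠ HNode.ua) : Reach Et r x := by
  rcases (ht.1.reach_ua x hx).cases_head with h | ⟨z, hz, hzx⟩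
  · exact absurd h.symm hx'
  · rwa [ht.2.1.unique hz hr] at hzx

lemma finite_nodes (ht : IsHistory Vt Et) : Vt.Finite := by
  obtain ⟨r, hr, -⟩ := ht.2.1
  obtain ⟨-, hrV⟩ := ht.1.edge_mem _ hr
  have hr' := ht.1.ne_ua_of_mem hr
  have hinj : Set.InjOn cladeUnion {x ∈ Vt | x ≠ HNode.ua} := by
    rintro x ⟨hx, hx'⟩ y ⟨hy, hy'⟩ hxy
    exact ht.1.eq_of_reach_of_subset ((ht.reach_iff hx hx' hy).2 ⟨hy', hxy.ge⟩) hx' hxy.le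
  have himg : cladeUnion '' {x ∈ Vt | x ≠ HNode.ua} ⊆ {C | C ⊆ cladeUnion r} := by
    rintro _ ⟨x, ⟨hx, hx'⟩, rfl⟩
    exact ((ht.reach_iff hrV hr' hx).1 (ht.reach_of_root hr hx hx')).2
  refine ((Set.Finite.of_finite_image
    ((ht.1.finite_cladeUnion hrV).finite_subsets.subset himg) hinj).insert HNode.ua).subset ?_
  intro x hx
  by_cases hx' : x = HNode.ua
  exacts [Or.inl hx', Or.inr ⟨hx, hx'⟩]

lemma finite_edges (ht : IsHistory Vt Et) : Et.Finite :=
  (ht.finite_nodes.prod ht.finite_nodes).subset fun e he => ht.1.edge_mem e he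

lemma parent_eq_of_reach (ht : IsHistory Vt Et) (hxy : (x, y) ∈ Et) (hx'y : (x', y) ∈ Et)
    (h : Reach Et x x') : x = x' := by
  rcases h.cases_head with h | ⟨u, hxu, hux'⟩
  · exact h
  · have hyu : y = u := ht.child_eq_of_inter_nonempty hxy hxu <| by
      rw [Set.inter_eq_left.2 ((ht.1.cladeUnion_ssubset hx'y fun hx' =>
        ht.1.ne_ua_of_mem hxu (ht.1.eq_ua_of_reach (hx' ▸ hux'))).subset.trans
        (ht.1.cladeUnion_subset_of_reach hux' (ht.1.ne_ua_of_mem hxu)))]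
      exact ht.1.cladeUnion_nonempty (ht.1.edge_mem _ hxy).2 (ht.1.ne_ua_of_mem hxy)
    exact absurd (hyu ▸ hux') (ht.1.not_reach_of_mem hx'y)

lemma parent_unique (ht : IsHistory Vt Et) (hxy : (x, y) ∈ Et) (hx'y : (x', y) ∈ Et) :
    x = x' := by
  have hx := (ht.1.edge_mem _ hxy).1
  have hx' := (ht.1.edge_mem _ hx'y).1
  by_cases hxu : x = HNode.ua
  · exact ht.parent_eq_of_reach hxy hx'y (hxu ▸ ht.1.reach_ua x' hx')
  by_cases hx'u : x' = HNode.ua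
  · exact (ht.parent_eq_of_reach hx'y hxy (hx'u ▸ ht.1.reach_ua x hx)).symm
  obtain ⟨p, hp⟩ := ht.1.cladeUnion_nonempty (ht.1.edge_mem _ hxy).2 (ht.1.ne_ua_of_mem hxy)
  rcases ht.reach_or_reach hx hx' ⟨p, (ht.1.cladeUnion_ssubset hxy hxu).subset hp,
      (ht.1.cladeUnion_ssubset hx'y hx'u).subset hp⟩ with h | h
  · exact ht.parent_eq_of_reach hxy hx'y h
  · exact (ht.parent_eq_of_reach hx'y hxy h).symm

lemma augEdges_eq (ht : IsHistory Vt Et) (h : (vp, vc) ∈ Et) :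
    augEdges Et vp vc = Et ∩ {e | InClade (cladeUnion vc) e.2} := by
  have hvc := ht.1.ne_ua_of_mem h
  ext ⟨x, y⟩
  simp only [augEdges, edgesBelow, Set.mem_insert_iff, Set.mem_ofPred_eq, Set.mem_inter_iff,
    Prod.mk.injEq]
  constructor
  · rintro (⟨rfl, rfl⟩ | ⟨hxy, hx⟩)
    · exact ⟨h, hvc, subset_rfl⟩
    · exact ⟨hxy, ht.1.inClade_of_reach ⟨hvc, subset_rfl⟩ (hx.tail hxy)⟩
  · rintro ⟨hxy, hy⟩
    rcases ((ht.reach_iff (ht.1.edge_mem _ h).2 hvc (ht.1.edge_mem _ hxy).2).2 hy).cases_tail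
      with rfl | ⟨z, hz, hzy⟩
    · exact Or.inl ⟨ht.parent_unique hxy h, rfl⟩
    · exact Or.inr ⟨hxy, ht.parent_unique hzy hxy ▸ hz⟩

lemma eq_of_inClade_of_not_inClade (ht : IsHistory Vt Et) (h : (vp, vc) ∈ Et)
    (hxy : (x, y) ∈ Et) (hy : InClade (cladeUnion vc) y) (hx : ¬ InClade (cladeUnion vc) x) :
    x = vp ∧ y = vc := by
  have hmem : (x, y) ∈ augEdges Et vp vc := by
    rw [ht.augEdges_eq h]
    exact ⟨hxy, hy⟩
  rcases hmem with h' | ⟨-, hx'⟩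
  · exact Prod.mk.inj h'
  · exact absurd (ht.1.inClade_of_reach ⟨ht.1.ne_ua_of_mem h, subset_rfl⟩ hx') hx

lemma augEdges_ua (ht : IsHistory Vt Et) (hr : (HNode.ua, r) ∈ Et) :
    augEdges Et HNode.ua r = Et := by
  rw [ht.augEdges_eq hr, Set.inter_eq_left]
  intro e he
  have hy := (ht.1.edge_mem e he).2
  exact (ht.reach_iff (ht.1.edge_mem _ hr).2 (ht.1.ne_ua_of_mem hr) hy).1
    (ht.reach_of_root hr hy (ht.1.ne_ua_of_mem he))

end IsHistory

namespace IsHistory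

variable {Vt : Set (HNode Y)} {Et : Set (HNode Y × HNode Y)} {vp vc : HNode Y}

lemma edgesBelow_eq_biUnion (ht : IsHistory Vt Et) {ℓ : Y} {U : Set (Set Y)}
    {w : Set Y → HNode Y}
    (hw : ∀ C ∈ U, (HNode.node ℓ U, w C) ∈ Et ∧ cladeUnion (w C) = C) :
    edgesBelow Et (HNode.node ℓ U) = ⋃ C ∈ U, augEdges Et (HNode.node ℓ U) (w C) := by
  ext e
  simp only [Set.mem_iUnion, exists_prop]
  constructor
  · rintro ⟨he, hv⟩
    have hne : e.2 ≠ HNode.node ℓ U := fun h => ht.1.not_reach_of_mem (h ▸ he) hv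
    rcases (hv.tail he).cases_head with h | ⟨z, hz, hze⟩
    · exact absurd h.symm hne
    · have hzU := ht.1.edge_clade ℓ U z hz
      refine ⟨_, hzU, ?_⟩
      rw [ht.augEdges_eq (hw _ hzU).1, (hw _ hzU).2]
      exact ⟨he, ht.1.inClade_of_reach ⟨ht.1.ne_ua_of_mem hz, subset_rfl⟩ hze⟩
  · rintro ⟨C, hC, rfl | ⟨he, hre⟩⟩
    · exact ⟨(hw C hC).1, .refl⟩
    · exact ⟨he, .head (hw C hC).1 hre⟩

lemma pairwiseDisjoint_augEdges (ht : IsHistory Vt Et) {ℓ : Y} {U : Set (Set Y)}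
    (hv : HNode.node ℓ U ∈ Vt) {w : Set Y → HNode Y}
    (hw : ∀ C ∈ U, (HNode.node ℓ U, w C) ∈ Et ∧ cladeUnion (w C) = C) :
    U.PairwiseDisjoint fun C => augEdges Et (HNode.node ℓ U) (w C) := by
  intro C hC C' hC' hne
  simp only [Function.onFun, ht.augEdges_eq (hw _ hC).1, ht.augEdges_eq (hw _ hC').1,
    (hw _ hC).2, (hw _ hC').2]
  refine Set.disjoint_left.2 fun e ⟨he, hin⟩ he' => ?_
  obtain ⟨-, hin'⟩ := he'
  obtain ⟨p, hp⟩ := ht.1.cladeUnion_nonempty (ht.1.edge_mem e he).2 hin.1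
  exact Set.disjoint_left.1 ((ht.1.valid ℓ U hv).2.1 C hC C' hC' hne) (hin.2 hp) (hin'.2 hp)

variable {W : Type v} [AddCommMonoid W]

lemma gweight_augEdges (ht : IsHistory Vt Et) (f : HNode Y × HNode Y → W) (h : (vp, vc) ∈ Et) :
    gweight f (augEdges Et vp vc) = f (vp, vc) + gweight f (edgesBelow Et vc) :=
  finsum_mem_insert f (fun he => ht.1.not_reach_of_mem h he.2)
    (ht.finite_edges.subset fun _ he => he.1)

lemma gweight_edgesBelow (ht : IsHistory Vt Et) (f : HNode Y × HNode Y → W) {ℓ : Y}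
    {U : Set (Set Y)} (hv : HNode.node ℓ U ∈ Vt) {w : Set Y → HNode Y}
    (hw : ∀ C ∈ U, (HNode.node ℓ U, w C) ∈ Et ∧ cladeUnion (w C) = C) :
    gweight f (edgesBelow Et (HNode.node ℓ U)) =
      ∑ᶠ C ∈ U, gweight f (augEdges Et (HNode.node ℓ U) (w C)) := by
  rw [gweight, ht.edgesBelow_eq_biUnion hw]
  exact finsum_mem_biUnion (ht.pairwiseDisjoint_augEdges hv hw) (ht.1.valid ℓ U hv).2.2.2.1
    fun C _ => (ht.finite_edges.subset fun _ he => he.1).insert _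

lemma isSubhistoryRooted_below {V : Set (HNode Y)} {E : Set (HNode Y × HNode Y)}
    (ht : IsHistory Vt Et) (hV : Vt ⊆ V) (hE : Et ⊆ E) {v : HNode Y} (hv : v ∈ Vt)
    (hv' : v ≠ HNode.ua) : IsSubhistoryRooted V E (nodesBelow Et v) (edgesBelow Et v) v where
  subV := fun _ hx => hV (ht.1.mem_of_reach_s6 hv hx)
  subE := fun _ he => hE he.1
  ua_not_mem := fun h => hv' (ht.1.eq_ua_of_reach h)
  edge_mem := fun e he => ⟨he.2, he.2.tail he.1⟩
  root_mem := .refl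
  reach_root := fun _ hx => reach_of_forall_mem hx fun _ _ hx' hxy _ => ⟨hxy, hx'⟩
  unique_desc := by
    intro ℓ U hmem C hC
    obtain ⟨vc, ⟨hvc, hvcC⟩, huniq⟩ := ht.2.2 ℓ U (ht.1.mem_of_reach_s6 hv hmem) C hC
    exact ⟨vc, ⟨⟨hvc, hmem⟩, hvcC⟩, fun y hy => huniq y ⟨hy.1.1, hy.2⟩⟩

end IsHistory

lemma gweight_augEdges_mem_augWeights {W : Type v} [AddCommMonoid W] {V : Set (HNode Y)}
    {E : Set (HNode Y × HNode Y)} {t : Hist Y} (f : HNode Y × HNode Y → W)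
    (ht : HistoryIn V E t.1 t.2) {vp vc : HNode Y} (h : (vp, vc) ∈ t.2) :
    gweight f (augEdges t.2 vp vc) ∈ augWeights f V E vp (cladeUnion vc) :=
  ⟨vc, _, _, ht.2.1 h, rfl, ht.2.2.isSubhistoryRooted_below ht.1 ht.2.1
    (ht.2.2.1.edge_mem _ h).2 (ht.2.2.1.ne_ua_of_mem h), rfl⟩

def graft (C : Set Y) (t₂ t₃ : Hist Y) : Hist Y :=
  (t₂.1 \ {x | InClade C x} ∪ t₃.1 ∩ {x | InClade C x},
    t₂.2 \ {e | InClade C e.2} ∪ t₃.2 ∩ {e | InClade C e.2})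

lemma gweight_graft {W : Type v} [AddCommMonoid W] (f : HNode Y × HNode Y → W) (C : Set Y)
    {t₂ t₃ : Hist Y} (h₂ : t₂.2.Finite) (h₃ : t₃.2.Finite) :
    gweight f (graft C t₂ t₃).2 =
      gweight f (t₂.2 \ {e | InClade C e.2}) + gweight f (t₃.2 ∩ {e | InClade C e.2}) :=
  finsum_mem_union (Set.disjoint_sdiff_left.mono_right Set.inter_subset_right)
    (h₂.subset Set.sdiff_subset) (h₃.subset Set.inter_subset_left)

structure GraftSite (C : Set Y) (t₂ t₃ : Hist Y) (vp vc₂ vc₃ : HNode Y) : Prop where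
  hist₂ : IsHistory t₂.1 t₂.2
  hist₃ : IsHistory t₃.1 t₃.2
  mem₂ : (vp, vc₂) ∈ t₂.2
  mem₃ : (vp, vc₃) ∈ t₃.2
  cladeUnion₂ : cladeUnion vc₂ = C
  cladeUnion₃ : cladeUnion vc₃ = C

namespace GraftSite

variable {C : Set Y} {t₂ t₃ : Hist Y} {vp vc₂ vc₃ x y : HNode Y}

lemma symm (hs : GraftSite C t₂ t₃ vp vc₂ vc₃) : GraftSite C t₃ t₂ vp vc₃ vc₂ :=
  ⟨hs.hist₃, hs.hist₂, hs.mem₃, hs.mem₂, hs.cladeUnion₃, hs.cladeUnion₂⟩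

lemma inClade₂ (hs : GraftSite C t₂ t₃ vp vc₂ vc₃) : InClade C vc₂ :=
  ⟨hs.hist₂.1.ne_ua_of_mem hs.mem₂, hs.cladeUnion₂.le⟩

lemma not_inClade_parent (hs : GraftSite C t₂ t₃ vp vc₂ vc₃) : ¬ InClade C vp :=
  hs.cladeUnion₂ ▸ hs.hist₂.1.not_inClade_of_mem hs.mem₂

lemma eq_of_inClade₂ (hs : GraftSite C t₂ t₃ vp vc₂ vc₃) (hxy : (x, y) ∈ t₂.2)
    (hy : InClade C y) (hx : ¬ InClade C x) : x = vp ∧ y = vc₂ := by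
  rw [← hs.cladeUnion₂] at hy hx
  exact hs.hist₂.eq_of_inClade_of_not_inClade hs.mem₂ hxy hy hx

lemma reach_graft_of_not_inClade (hs : GraftSite C t₂ t₃ vp vc₂ vc₃) (hx : x ∈ t₂.1)
    (hx' : ¬ InClade C x) : Reach (graft C t₂ t₃).2 HNode.ua x :=
  reach_of_forall_mem (hs.hist₂.1.reach_ua x hx) fun _ _ _ hab hbx =>
    Or.inl ⟨hab, fun hb => hx' (hs.hist₂.1.inClade_of_reach hb hbx)⟩

lemma reach_graft_of_inClade (hs : GraftSite C t₂ t₃ vp vc₂ vc₃) (hx : x ∈ t₃.1)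
    (hx' : InClade C x) : Reach (graft C t₂ t₃).2 HNode.ua x := by
  have hvc₃ := (hs.hist₃.1.edge_mem _ hs.mem₃).2
  have hpath := (hs.hist₃.reach_iff hvc₃ hs.symm.inClade₂.1 hx).2 (hs.cladeUnion₃ ▸ hx')
  refine (hs.reach_graft_of_not_inClade (hs.hist₂.1.edge_mem _ hs.mem₂).1
    hs.not_inClade_parent).tail (Or.inr ⟨hs.mem₃, hs.symm.inClade₂⟩) |>.trans ?_
  exact reach_of_forall_mem hpath fun _ _ ha hab _ =>
    Or.inr ⟨hab, hs.hist₃.1.inClade_of_reach hs.symm.inClade₂ (ha.tail hab)⟩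

/-- If the `P`-child in `t₂` lies in `C`, the node is `vp` and that child is exchanged
for `vc₃`. -/
lemma existsUnique_graft_of_not_inClade (hs : GraftSite C t₂ t₃ vp vc₂ vc₃)
    (hx : ¬ InClade C x) {P : HNode Y → Prop} (hP : P vc₂ ↔ P vc₃)
    (h₂ : ∃! y, (x, y) ∈ t₂.2 ∧ P y) (h₃ : x = vp → ∃! y, (x, y) ∈ t₃.2 ∧ P y) :
    ∃! y, (x, y) ∈ (graft C t₂ t₃).2 ∧ P y := by
  obtain ⟨y₂, ⟨hy₂, hPy₂⟩, huniq₂⟩ := h₂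
  by_cases hin : InClade C y₂
  · obtain ⟨rfl, rfl⟩ := hs.eq_of_inClade₂ hy₂ hin hx
    obtain ⟨y₃, -, huniq₃⟩ := h₃ rfl
    refine ⟨vc₃, ⟨Or.inr ⟨hs.mem₃, hs.symm.inClade₂⟩, hP.1 hPy₂⟩, ?_⟩
    rintro y ⟨⟨hy, hyC⟩ | ⟨hy, -⟩, hPy⟩
    · exact absurd (huniq₂ y ⟨hy, hPy⟩ ▸ hin) hyC
    · exact (huniq₃ y ⟨hy, hPy⟩).trans (huniq₃ vc₃ ⟨hs.mem₃, hP.1 hPy₂⟩).symm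
  · refine ⟨y₂, ⟨Or.inl ⟨hy₂, hin⟩, hPy₂⟩, ?_⟩
    rintro y ⟨⟨hy, -⟩ | ⟨hy, hyC⟩, hPy⟩
    · exact huniq₂ y ⟨hy, hPy⟩
    · obtain ⟨rfl, rfl⟩ := hs.symm.eq_of_inClade₂ hy hyC hx
      exact absurd (huniq₂ vc₂ ⟨hs.mem₂, hP.2 hPy⟩ ▸ hs.inClade₂) hin

lemma existsUnique_graft_of_inClade (hs : GraftSite C t₂ t₃ vp vc₂ vc₃)
    (hx : InClade C x) {P : HNode Y → Prop} (h₃ : ∃! y, (x, y) ∈ t₃.2 ∧ P y) :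
    ∃! y, (x, y) ∈ (graft C t₂ t₃).2 ∧ P y := by
  obtain ⟨y₃, ⟨hy₃, hPy₃⟩, huniq₃⟩ := h₃
  refine ⟨y₃, ⟨Or.inr ⟨hy₃, hs.hist₃.1.inClade_of_reach hx (.single hy₃)⟩, hPy₃⟩, ?_⟩
  rintro y ⟨⟨hy, hyC⟩ | ⟨hy, -⟩, hPy⟩
  · exact absurd (hs.hist₂.1.inClade_of_reach hx (.single hy)) hyC
  · exact huniq₃ y ⟨hy, hPy⟩

lemma uniqueDesc_graft (hs : GraftSite C t₂ t₃ vp vc₂ vc₃) :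
    UniqueDesc (graft C t₂ t₃).1 (graft C t₂ t₃).2 := by
  rintro ℓ U (⟨hx, hx'⟩ | ⟨hx, hx'⟩) C₀ hC₀
  · refine hs.existsUnique_graft_of_not_inClade hx' ?_ (hs.hist₂.2.2 ℓ U hx C₀ hC₀) ?_
    · rw [hs.cladeUnion₂, hs.cladeUnion₃]
    · rintro rfl
      exact hs.hist₃.2.2 ℓ U (hs.hist₃.1.edge_mem _ hs.mem₃).1 C₀ hC₀
  · exact hs.existsUnique_graft_of_inClade hx' (hs.hist₃.2.2 ℓ U hx C₀ hC₀)

lemma isHistory_graft (hs : GraftSite C t₂ t₃ vp vc₂ vc₃) :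
    IsHistory (graft C t₂ t₃).1 (graft C t₂ t₃).2 := by
  have hG₂ := hs.hist₂.1
  have hG₃ := hs.hist₃.1
  refine ⟨⟨Or.inl ⟨hG₂.ua_mem, fun h => h.1 rfl⟩, ?_, ?_, ?_, ?_, ?_, ?_⟩, ?_, hs.uniqueDesc_graft⟩
  · rintro ℓ U (⟨h, -⟩ | ⟨h, -⟩)
    exacts [hG₂.valid ℓ U h, hG₃.valid ℓ U h]
  · rintro ⟨x, y⟩ (⟨hxy, hy⟩ | ⟨hxy, hy⟩)
    · exact ⟨Or.inl ⟨(hG₂.edge_mem _ hxy).1, fun hx => hy (hG₂.inClade_of_reach hx (.single hxy))⟩,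
        Or.inl ⟨(hG₂.edge_mem _ hxy).2, hy⟩⟩
    · refine ⟨?_, Or.inr ⟨(hG₃.edge_mem _ hxy).2, hy⟩⟩
      by_cases hx : InClade C x
      · exact Or.inr ⟨(hG₃.edge_mem _ hxy).1, hx⟩
      · obtain ⟨rfl, -⟩ := hs.symm.eq_of_inClade₂ hxy hy hx
        exact Or.inl ⟨(hG₂.edge_mem _ hs.mem₂).1, hx⟩
  · rintro x (⟨hx, hx'⟩ | ⟨hx, hx'⟩)
    exacts [hs.reach_graft_of_not_inClade hx hx', hs.reach_graft_of_inClade hx hx']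
  · rintro v (⟨h, -⟩ | ⟨h, -⟩)
    exacts [hG₂.no_in_ua v h, hG₃.no_in_ua v h]
  · rintro ℓ U v (⟨h, -⟩ | ⟨h, -⟩)
    exacts [hG₂.edge_clade ℓ U v h, hG₃.edge_clade ℓ U v h]
  · intro ℓ U hx C₀ hC₀
    exact (hs.uniqueDesc_graft ℓ U hx C₀ hC₀).exists
  · simpa using hs.existsUnique_graft_of_not_inClade (P := fun _ => True) (fun h => h.1 rfl)
      Iff.rfl (by simpa using hs.hist₂.2.1) (fun _ => by simpa using hs.hist₃.2.1)

end GraftSite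

lemma mem_unionE {T : Set (Hist Y)} {e : HNode Y × HNode Y} :
    e ∈ unionE T ↔ ∃ t ∈ T, e ∈ t.2 := by
  simp [unionE]

lemma subset_unionV {T : Set (Hist Y)} {t : Hist Y} (h : t ∈ T) : t.1 ⊆ unionV T :=
  Set.subset_biUnion_of_mem (u := fun t : Hist Y => t.1) h

lemma subset_unionE {T : Set (Hist Y)} {t : Hist Y} (h : t ∈ T) : t.2 ⊆ unionE T :=
  Set.subset_biUnion_of_mem (u := fun t : Hist Y => t.2) h

section Weights

variable {W : Type v} [AddCommMonoid W] {f : HNode Y × HNode Y → W} {T : Set (Hist Y)}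

def AugWeightsDiffer (f : HNode Y × HNode Y → W) (T : Set (Hist Y)) : Prop :=
  ∃ t₂ ∈ T, ∃ t₃ ∈ T, ∃ ℓ U vc₂ vc₃,
    (HNode.node ℓ U, vc₂) ∈ t₂.2 ∧ (HNode.node ℓ U, vc₃) ∈ t₃.2 ∧
    cladeUnion vc₂ = cladeUnion vc₃ ∧
    gweight f (augEdges t₂.2 (HNode.node ℓ U) vc₂) ≠
      gweight f (augEdges t₃.2 (HNode.node ℓ U) vc₃)

/-- If a history of `D(T)` and a history of `T` share an edge but weigh differently below it,
descend along the clades of the first history: at each step either two histories of `T`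
already disagree, or the disagreement with a history of `T` moves to a smaller clade. -/
lemma augWeightsDiffer_of_gweight_augEdges_ne (hT : ∀ t ∈ T, IsHistory t.1 t.2) {h t : Hist Y}
    (hh : HistoryIn (unionV T) (unionE T) h.1 h.2) (ht : t ∈ T) {vp vc : HNode Y}
    (hvh : (vp, vc) ∈ h.2) (hvt : (vp, vc) ∈ t.2)
    (hne : gweight f (augEdges h.2 vp vc) ≠ gweight f (augEdges t.2 vp vc)) :
    AugWeightsDiffer f T := by
  obtain ⟨-, hhE, hh⟩ := hh
  induction hn : (cladeUnion vc).ncard using Nat.strong_induction_on generalizing t vp vc with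
  | _ n ih =>
  have htt := hT t ht
  rw [hh.gweight_augEdges f hvh, htt.gweight_augEdges f hvt] at hne
  have hne' : gweight f (edgesBelow h.2 vc) ≠ gweight f (edgesBelow t.2 vc) :=
    fun heq => hne (by rw [heq])
  cases vc with
  | ua => exact absurd rfl (hh.1.ne_ua_of_mem hvh)
  | node ℓ U =>
  have hvch := (hh.1.edge_mem _ hvh).2
  have hvct := (htt.1.edge_mem _ hvt).2
  choose! wh hwh using fun C (hC : C ∈ U) => (hh.2.2 ℓ U hvch C hC).exists
  choose! wt hwt using fun C (hC : C ∈ U) => (htt.2.2 ℓ U hvct C hC).exists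
  rw [hh.gweight_edgesBelow f hvch hwh, htt.gweight_edgesBelow f hvct hwt] at hne'
  obtain ⟨C, hC, hCne⟩ : ∃ C ∈ U, gweight f (augEdges h.2 (HNode.node ℓ U) (wh C)) ≠
      gweight f (augEdges t.2 (HNode.node ℓ U) (wt C)) := by
    by_contra! hall
    exact hne' (finsum_mem_congr rfl hall)
  obtain ⟨t', ht', hwt'⟩ := mem_unionE.1 (hhE (hwh C hC).1)
  by_cases heq : gweight f (augEdges t'.2 (HNode.node ℓ U) (wh C)) =
      gweight f (augEdges t.2 (HNode.node ℓ U) (wt C))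
  · have hlt : (cladeUnion (wh C)).ncard < n := by
      rw [← hn, (hwh C hC).2]
      exact Set.ncard_lt_ncard ((hh.1.valid ℓ U hvch).ssubset_cladeUnion ℓ hC)
        (hh.1.finite_cladeUnion hvch)
    exact ih _ hlt ht' (hwh C hC).1 hwt' (heq ▸ hCne) rfl
  · exact ⟨t', ht', t, ht, ℓ, U, wh C, wt C, hwt', (hwt C hC).1,
      (hwh C hC).2.trans (hwt C hC).2.symm, heq⟩

lemma augWeightsDiffer_of_gweight_ne (hT : ∀ t ∈ T, IsHistory t.1 t.2) {K : W}
    (hK : ∀ t ∈ T, gweight f t.2 = K) {h : Hist Y}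
    (hh : HistoryIn (unionV T) (unionE T) h.1 h.2) (hne : gweight f h.2 ≠ K) :
    AugWeightsDiffer f T := by
  obtain ⟨r, hr, -⟩ := hh.2.2.2.1
  obtain ⟨t, ht, hrt⟩ := mem_unionE.1 (hh.2.1 hr)
  refine augWeightsDiffer_of_gweight_augEdges_ne hT hh ht hr hrt ?_
  rwa [hh.2.2.augEdges_ua hr, (hT t ht).augEdges_ua hrt, hK t ht]

variable [PartialOrder W]

/-- Exchanging the lighter piece of `t₂` for the heavier piece of `t₃` makes `t₂` heavier and
`t₃` lighter. -/
lemma GraftSite.exists_lt_and_exists_gt {C : Set Y} {t₂ t₃ : Hist Y} {vp vc₂ vc₃ : HNode Y}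
    (hs : GraftSite C t₂ t₃ vp vc₂ vc₃) {V : Set (HNode Y)} {E : Set (HNode Y × HNode Y)}
    (hV : t₂.1 ∪ t₃.1 ⊆ V) (hE : t₂.2 ∪ t₃.2 ⊆ E) {S : Set W} (hS : RespectsAdd S)
    (hb : gweight f (augEdges t₂.2 vp vc₂) ∈ S) (hc : gweight f (augEdges t₃.2 vp vc₃) ∈ S)
    (hlt : gweight f (augEdges t₂.2 vp vc₂) < gweight f (augEdges t₃.2 vp vc₃))
    {K : W} (hK₂ : gweight f t₂.2 = K) (hK₃ : gweight f t₃.2 = K) :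
    (∃ Vt Et, HistoryIn V E Vt Et ∧ gweight f Et < K) ∧
      (∃ Vt Et, HistoryIn V E Vt Et ∧ K < gweight f Et) := by
  have hfin₂ := hs.hist₂.finite_edges
  have hfin₃ := hs.hist₃.finite_edges
  have hin : ∀ {t t' : Hist Y}, t.1 ∪ t'.1 ⊆ V → t.2 ∪ t'.2 ⊆ E →
      (graft C t t').1 ⊆ V ∧ (graft C t t').2 ⊆ E := fun hV hE =>
    ⟨Set.union_subset_union Set.sdiff_subset Set.inter_subset_left |>.trans hV,
      Set.union_subset_union Set.sdiff_subset Set.inter_subset_left |>.trans hE⟩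
  rw [hs.hist₂.augEdges_eq hs.mem₂, hs.cladeUnion₂] at hb hlt
  rw [hs.hist₃.augEdges_eq hs.mem₃, hs.cladeUnion₃] at hc hlt
  have hsplit : ∀ {t : Hist Y}, t.2.Finite → gweight f t.2 =
      gweight f (t.2 ∩ {e | InClade C e.2}) + gweight f (t.2 \ {e | InClade C e.2}) :=
    fun hfin => (finsum_mem_inter_add_sdiff _ hfin).symm
  rw [hsplit hfin₂] at hK₂
  rw [hsplit hfin₃] at hK₃
  refine ⟨⟨_, _, ⟨(hin (Set.union_comm _ _ ▸ hV) (Set.union_comm _ _ ▸ hE)).1,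
      (hin (Set.union_comm _ _ ▸ hV) (Set.union_comm _ _ ▸ hE)).2, hs.symm.isHistory_graft⟩, ?_⟩,
    ⟨_, _, ⟨(hin hV hE).1, (hin hV hE).2, hs.isHistory_graft⟩, ?_⟩⟩
  · rw [gweight_graft f C hfin₃ hfin₂, ← hK₃, add_comm (gweight f (t₃.2 \ _))]
    exact (hS _ hb _ hc _).1 hlt
  · rw [gweight_graft f C hfin₂ hfin₃, ← hK₂, add_comm (gweight f (t₂.2 \ _))]
    exact (hS _ hb _ hc _).1 hlt

lemma exists_lt_and_exists_gt_of_augWeightsDiffer (hT : ∀ t ∈ T, IsHistory t.1 t.2)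
    (hco : CladeOrdered f (unionV T) (unionE T)) {K : W} (hK : ∀ t ∈ T, gweight f t.2 = K)
    (hd : AugWeightsDiffer f T) :
    (∃ Vt Et, HistoryIn (unionV T) (unionE T) Vt Et ∧ gweight f Et < K) ∧
      (∃ Vt Et, HistoryIn (unionV T) (unionE T) Vt Et ∧ K < gweight f Et) := by
  obtain ⟨t₂, ht₂, t₃, ht₃, ℓ, U, vc₂, vc₃, e₂, e₃, hC, hne⟩ := hd
  have hs : GraftSite (cladeUnion vc₂) t₂ t₃ (HNode.node ℓ U) vc₂ vc₃ :=
    ⟨hT t₂ ht₂, hT t₃ ht₃, e₂, e₃, rfl, hC.symm⟩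
  have hin₂ : HistoryIn (unionV T) (unionE T) t₂.1 t₂.2 :=
    ⟨subset_unionV ht₂, subset_unionE ht₂, hs.hist₂⟩
  have hin₃ : HistoryIn (unionV T) (unionE T) t₃.1 t₃.2 :=
    ⟨subset_unionV ht₃, subset_unionE ht₃, hs.hist₃⟩
  obtain ⟨hTot, hS⟩ := hco.2.1 ℓ U (hin₂.1 (hs.hist₂.1.edge_mem _ e₂).1) _
    (hs.hist₂.1.edge_clade ℓ U vc₂ e₂)
  have hb := gweight_augEdges_mem_augWeights f hin₂ e₂
  have hc := hC ▸ gweight_augEdges_mem_augWeights f hin₃ e₃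
  rcases hTot _ hb _ hc with hle | hle
  · exact hs.exists_lt_and_exists_gt (Set.union_subset hin₂.1 hin₃.1)
      (Set.union_subset hin₂.2.1 hin₃.2.1) hS hb hc (hle.lt_of_ne hne) (hK t₂ ht₂) (hK t₃ ht₃)
  · exact hs.symm.exists_lt_and_exists_gt (Set.union_subset hin₃.1 hin₂.1)
      (Set.union_subset hin₃.2.1 hin₂.2.1) hS hc hb (hle.lt_of_ne hne.symm) (hK t₃ ht₃)
      (hK t₂ ht₂)

end Weights

/-- Theorem `updown`: if every history in `T` has weight `K`, then the
history sDAG constructed from `T` contains a history of weight `< K` iff it contains a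
history of weight `> K`. -/
theorem updown {W : Type v} [AddCommMonoid W] [PartialOrder W]
    (T : Set (Hist Y)) (hT : ∀ t ∈ T, IsHistory t.1 t.2)
    (f : HNode Y × HNode Y → W)
    (hco : CladeOrdered f (unionV T) (unionE T))
    (K : W) (hK : ∀ t ∈ T, gweight f t.2 = K) :
    (∃ Vt Et, HistoryIn (unionV T) (unionE T) Vt Et ∧ gweight f Et < K) ↔
      (∃ Vt Et, HistoryIn (unionV T) (unionE T) Vt Et ∧ K < gweight f Et) := by
  have key : ∀ h : Hist Y, HistoryIn (unionV T) (unionE T) h.1 h.2 → gweight f h.2 ≠ K →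
      (∃ Vt Et, HistoryIn (unionV T) (unionE T) Vt Et ∧ gweight f Et < K) ∧
        (∃ Vt Et, HistoryIn (unionV T) (unionE T) Vt Et ∧ K < gweight f Et) :=
    fun h hh hne => exists_lt_and_exists_gt_of_augWeightsDiffer hT hco hK
      (augWeightsDiffer_of_gweight_ne hT hK hh hne)
  constructor
  · rintro ⟨Vt, Et, hin, hlt⟩
    exact (key (Vt, Et) hin hlt.ne).2
  · rintro ⟨Vt, Et, hin, hgt⟩
    exact (key (Vt, Et) hin hgt.ne').1

end HistorySDAGs
end
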